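/- For all positive integers α and k, the graph G^{α+1}_{3k+3α−1} has α-edge-crossing width at least k+1. -/

import Mathlib

open SimpleGraph

universe u

/-- A tree-cut decomposition of a graph `G`: a finite tree `T` together with
pairwise disjoint (possibly empty) bags covering the vertex set of `G`. -/
structure TreeCutDecomp {V : Type u} (G : SimpleGraph V) where
  β : Type
  fintypeβ : Fintype β
  T : SimpleGraph β
  isTree : T.IsTree
  bag : β → Set V
  disj : Pairwise fun s t => Disjoint (bag s) (bag t)
  covers : ∀ v : V, ∃ t, v ∈ bag t

namespace TreeCutDecomp

variable {V : Type u} {G : SimpleGraph V}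

/-- The edge `e` of `G` crosses the bag at node `t`: its endpoints lie in bag-unions of
two distinct components of `T - t`. -/
def Crosses (D : TreeCutDecomp G) (t : D.β) (e : Sym2 V) : Prop :=
  e ∈ G.edgeSet ∧ ∃ (u v : V) (s₁ s₂ : D.β) (h₁ : s₁ ≠ t) (h₂ : s₂ ≠ t),
    e = s(u, v) ∧ u ∈ D.bag s₁ ∧ v ∈ D.bag s₂ ∧
    ¬ (D.T.induce {x | x ≠ t}).Reachable ⟨s₁, h₁⟩ ⟨s₂, h₂⟩

/-- The number of edges crossing the bag at node `t`. -/
noncomputable def crossNum (D : TreeCutDecomp G) (t : D.β) : ℕ :=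
  {e : Sym2 V | D.Crosses t e}.ncard

/-- The crossing number of the decomposition is at most `k`. -/
def CrossLE (D : TreeCutDecomp G) (k : ℕ) : Prop := ∀ t, D.crossNum t ≤ k

/-- The thickness (maximum bag size) of the decomposition is at most `a`. -/
def ThickLE (D : TreeCutDecomp G) (a : ℕ) : Prop := ∀ t, (D.bag t).ncard ≤ a

end TreeCutDecomp

/-- The `α`-edge-crossing width: minimum crossing number over tree-cut decompositions
of thickness at most `α`. -/
noncomputable def ecrwA {V : Type u} (G : SimpleGraph V) (a : ℕ) : ℕ :=
  sInf {k | ∃ D : TreeCutDecomp G, D.ThickLE a ∧ D.CrossLE k}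

/-- The edge-crossing width: minimum over tree-cut decompositions of the maximum of the
thickness and the crossing number. -/
noncomputable def ecrw {V : Type u} (G : SimpleGraph V) : ℕ :=
  sInf {k | ∃ D : TreeCutDecomp G, D.ThickLE k ∧ D.CrossLE k}

/-- The bipartite graph `G^n_k`: one side is `A = Fin n`, the other side consists of
pairs `(W, ℓ)` with `W` a 2-element subset of `A` and `ℓ ∈ [k]`; `a` is adjacent to
`(W, ℓ)` iff `a ∈ W`. -/
def Gnk (n k : ℕ) : SimpleGraph (Fin n ⊕ ({W : Finset (Fin n) // W.card = 2} × Fin k)) :=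
  SimpleGraph.fromRel fun x y =>
    match x, y with
    | Sum.inl a, Sum.inr (W, _) => a ∈ W.1
    | _, _ => False

section Star

variable {V : Type u}

/-- Star graph centered at `v₀`. -/
def starGraph (v₀ : V) : SimpleGraph V where
  Adj x y := x ≠ y ∧ (x = v₀ ∨ y = v₀)
  symm := by
    constructor
    rintro x y ⟨h1, h2⟩
    exact ⟨h1.symm, h2.symm⟩
  loopless := by constructor; rintro x ⟨h, _⟩; exact h rfl

lemma starGraph_first_edge (v₀ : V) {u : V} (hu : u ≠ v₀) :
    ∀ (p : (_root_.starGraph v₀).Walk u v₀), s(u, v₀) ∈ p.edges := by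
  intro p
  cases p with
  | nil => exact absurd rfl hu
  | cons h q =>
    rename_i y
    have hy : y = v₀ := by
      rcases h.2 with h' | h'
      · exact absurd h' hu
      · exact h'
    subst hy
    simp [Walk.edges_cons]

lemma starGraph_isTree (v₀ : V) : (_root_.starGraph v₀).IsTree := by
  constructor
  · have : Nonempty V := ⟨v₀⟩
    constructor
    intro x y
    have h : ∀ z : V, (_root_.starGraph v₀).Reachable z v₀ := by
      intro z
      by_cases hz : z = v₀
      · subst hz; exact Reachable.refl _
      · exact (Adj.reachable ⟨hz, Or.inr rfl⟩)
    exact (h x).trans (h y).symm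
  · rw [isAcyclic_iff_forall_adj_isBridge]
    intro v w hvw
    rw [isBridge_iff_adj_and_forall_walk_mem_edges]
    intro p
    rcases hvw.2 with h' | h'
    · subst h'
      have hw : w ≠ v := fun h => hvw.1 h.symm
      have := starGraph_first_edge v hw p.reverse
      rw [Walk.edges_reverse, List.mem_reverse] at this
      rwa [Sym2.eq_swap]
    · subst h'
      exact starGraph_first_edge w hvw.1 p

end Star

section TreeLemmas

variable {V : Type u} {T : SimpleGraph V}

lemma walk_out {s : Set V} : ∀ {a b : s} (_ : (T.induce s).Walk a b),
    ∃ W : T.Walk a b, ∀ y ∈ W.support, y ∈ s := by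
  intro a b w
  induction w with
  | nil => exact ⟨Walk.nil, by simp [a.2]⟩
  | @cons u x b h p ih =>
    obtain ⟨W, hW⟩ := ih
    have hadj : T.Adj u x := h
    refine ⟨Walk.cons hadj W, ?_⟩
    intro y hy
    rw [Walk.support_cons, List.mem_cons] at hy
    rcases hy with rfl | hy
    · exact u.2
    · exact hW y hy

lemma not_reach (hic : T.IsAcyclic) {x p q : V}
    (hp : p ≠ x) (hq : q ≠ x) (P : T.Walk p q) (hP : P.IsPath) (hx : x ∈ P.support) :
    ¬ (T.induce {y | y ≠ x}).Reachable ⟨p, hp⟩ ⟨q, hq⟩ := by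
  haveI := Classical.decEq V
  rintro ⟨w⟩
  obtain ⟨W, hW⟩ := walk_out w
  have huniq : (W.toPath : T.Walk p q) = P := by
    have := hic.path_unique W.toPath ⟨P, hP⟩
    exact congrArg Subtype.val this
  have hxW : x ∈ W.support := W.support_toPath_subset (huniq ▸ hx)
  exact hW x hxW rfl

lemma tree_key (hT : T.IsTree) (pa : ∀ p q : V, T.Walk p q)
    (hpa : ∀ p q, (pa p q).IsPath) {s t : V} (hst : s ≠ t) :
    ∃ c : V, c ≠ s ∧ ∀ r : V, r ≠ s → r ≠ t → r ≠ c →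
      s ∈ (pa r t).support ∨ t ∈ (pa s r).support ∨ c ∈ (pa s r).support ∨
        (c ∈ (pa r t).support ∧ c ≠ t) := by
  haveI := Classical.decEq V
  have huniq : ∀ (p q : V) (W : T.Walk p q), W.IsPath → W = pa p q := fun p q W hW =>
    (hT.existsUnique_path p q).unique hW (hpa p q)
  obtain ⟨c, hadj, q, hq⟩ := (pa s t).exists_eq_cons_of_ne hst
  have hcs : c ≠ s := hadj.ne'
  have hcsupp : c ∈ (pa s t).support := by rw [hq]; simp
  have hcedge : s(s, c) ∈ (pa s t).edges := by rw [hq]; simp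
  refine ⟨c, hcs, ?_⟩
  intro r hrs hrt hrc
  by_cases h1 : s ∈ (pa r t).support
  · exact Or.inl h1
  by_cases h2 : t ∈ (pa s r).support
  · exact Or.inr (Or.inl h2)
  set W : T.Walk s t := (pa s r).append (pa r t) with hWdef
  have htoP : (W.toPath : T.Walk s t) = pa s t := huniq s t _ W.toPath.2
  have hsub : (pa s t).support ⊆ W.support := htoP ▸ W.support_toPath_subset
  have hesub : (pa s t).edges ⊆ W.edges := htoP ▸ W.edges_toPath_subset
  have hcW : c ∈ (pa s r).support ∨ c ∈ (pa r t).support := by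
    have := hsub hcsupp
    rwa [hWdef, Walk.mem_support_append_iff] at this
  rcases hcW with hcW | hcW
  · exact Or.inr (Or.inr (Or.inl hcW))
  by_cases hct : c = t
  · exfalso
    subst hct
    have : s(s, c) ∈ (pa s r).edges ∨ s(s, c) ∈ (pa r c).edges := by
      have := hesub hcedge
      rwa [hWdef, Walk.edges_append, List.mem_append] at this
    rcases this with h | h
    · exact h2 (Walk.snd_mem_support_of_mem_edges _ h)
    · exact h1 (Walk.fst_mem_support_of_mem_edges _ h)
  · exact Or.inr (Or.inr (Or.inr ⟨hcW, hct⟩))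

end TreeLemmas

lemma main_contra (α k : ℕ) (hα : 0 < α) (hk : 0 < k)
    (D : TreeCutDecomp (Gnk (α + 1) (3 * k + 3 * α - 1)))
    (hth : D.ThickLE α) (hcr : D.CrossLE k) : False := by
  classical
  have hnd : ∀ v : (Fin (α + 1) ⊕ ({W : Finset (Fin (α + 1)) // W.card = 2} × Fin (3 * k + 3 * α - 1))), v ∈ D.bag (D.covers v).choose := fun v => (D.covers v).choose_spec
  set nd : (Fin (α + 1) ⊕ ({W : Finset (Fin (α + 1)) // W.card = 2} × Fin (3 * k + 3 * α - 1))) → D.β := fun v => (D.covers v).choose with hnddef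
  -- pigeonhole
  have hpig : ∃ i j : Fin (α + 1), nd (Sum.inl i) ≠ nd (Sum.inl j) := by
    by_contra h
    push_neg at h
    have hsub : Set.range (fun i : Fin (α + 1) => (Sum.inl i : (Fin (α + 1) ⊕ ({W : Finset (Fin (α + 1)) // W.card = 2} × Fin (3 * k + 3 * α - 1)))))
        ⊆ D.bag (nd (Sum.inl 0)) := by
      rintro v ⟨i, rfl⟩
      exact (h i 0) ▸ hnd (Sum.inl i)
    have h1 : (Set.range (fun i : Fin (α + 1) => (Sum.inl i : (Fin (α + 1) ⊕ ({W : Finset (Fin (α + 1)) // W.card = 2} × Fin (3 * k + 3 * α - 1)))))).ncard = α + 1 := by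
      rw [← Set.image_univ, Set.ncard_image_of_injective _ Sum.inl_injective,
        Set.ncard_univ, Nat.card_eq_fintype_card, Fintype.card_fin]
    have h2 := Set.ncard_le_ncard hsub (Set.toFinite _)
    have h3 := hth (nd (Sum.inl 0))
    omega
  obtain ⟨ia, ib, hne⟩ := hpig
  have hij : ia ≠ ib := fun h => hne (by rw [h])
  set a : (Fin (α + 1) ⊕ ({W : Finset (Fin (α + 1)) // W.card = 2} × Fin (3 * k + 3 * α - 1))) := Sum.inl ia with hadef
  set b : (Fin (α + 1) ⊕ ({W : Finset (Fin (α + 1)) // W.card = 2} × Fin (3 * k + 3 * α - 1))) := Sum.inl ib with hbdef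
  set s := nd a with hsdef
  set t := nd b with htdef
  have hst : s ≠ t := hne
  have hcard : ({ia, ib} : Finset (Fin (α + 1))).card = 2 := Finset.card_pair hij
  set w : Fin (3 * k + 3 * α - 1) → (Fin (α + 1) ⊕ ({W : Finset (Fin (α + 1)) // W.card = 2} × Fin (3 * k + 3 * α - 1))) := fun ℓ => Sum.inr (⟨{ia, ib}, hcard⟩, ℓ) with hwdef
  have hwinj : Function.Injective w := by
    intro x y h
    simp only [hwdef, Sum.inr.injEq, Prod.mk.injEq] at h
    exact h.2
  have hadj_a : ∀ ℓ, (Gnk (α + 1) (3 * k + 3 * α - 1)).Adj a (w ℓ) := by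
    intro ℓ
    refine ⟨by simp [hadef, hwdef], Or.inl ?_⟩
    show ia ∈ ({ia, ib} : Finset (Fin (α + 1)))
    simp
  have hadj_b : ∀ ℓ, (Gnk (α + 1) (3 * k + 3 * α - 1)).Adj b (w ℓ) := by
    intro ℓ
    refine ⟨by simp [hbdef, hwdef], Or.inl ?_⟩
    show ib ∈ ({ia, ib} : Finset (Fin (α + 1)))
    simp
  have he1 : ∀ ℓ, s(w ℓ, b) ∈ (Gnk (α + 1) (3 * k + 3 * α - 1)).edgeSet := fun ℓ => (hadj_b ℓ).symm
  have he2 : ∀ ℓ, s(a, w ℓ) ∈ (Gnk (α + 1) (3 * k + 3 * α - 1)).edgeSet := fun ℓ => hadj_a ℓ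
  -- tree machinery
  set pa : ∀ p q : D.β, D.T.Walk p q := fun p q => (D.isTree.existsUnique_path p q).choose
    with hpadef
  have hpa : ∀ p q, (pa p q).IsPath := fun p q => (D.isTree.existsUnique_path p q).choose_spec.1
  obtain ⟨c, hcs, hkey⟩ := tree_key D.isTree pa hpa hst
  have mkcross : ∀ (x : D.β) (u v : (Fin (α + 1) ⊕ ({W : Finset (Fin (α + 1)) // W.card = 2} × Fin (3 * k + 3 * α - 1)))) (p q : D.β) (hpx : p ≠ x) (hqx : q ≠ x),
      s(u, v) ∈ (Gnk (α + 1) (3 * k + 3 * α - 1)).edgeSet → u ∈ D.bag p → v ∈ D.bag q →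
      x ∈ (pa p q).support → D.Crosses x s(u, v) := by
    intro x u v p q hpx hqx hmem hu hv hx
    exact ⟨hmem, u, v, p, q, hpx, hqx, rfl, hu, hv,
      not_reach D.isTree.2 hpx hqx (pa p q) (hpa p q) hx⟩
  set CS : D.β → Set (Sym2 (Fin (α + 1) ⊕ ({W : Finset (Fin (α + 1)) // W.card = 2} × Fin (3 * k + 3 * α - 1)))) := fun x => {e | D.Crosses x e} with hCSdef
  set Sexc : Set (Fin (3 * k + 3 * α - 1)) := {ℓ | nd (w ℓ) = s ∨ nd (w ℓ) = t ∨ nd (w ℓ) = c} with hSexcdef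
  have hab : a ≠ b := by
    simp only [hadef, hbdef, ne_eq, Sum.inl.injEq]
    exact hij
  -- bound on exceptional set
  have hbound : Sexc.ncard + 2 ≤ 3 * α := by
    have hsub : (w '' Sexc) ∪ {a, b} ⊆ D.bag s ∪ D.bag t ∪ D.bag c := by
      rintro v hv
      rcases hv with ⟨ℓ, hℓ, rfl⟩ | hv
      · rcases hℓ with h | h | h
        · exact Or.inl (Or.inl (h ▸ hnd (w ℓ)))
        · exact Or.inl (Or.inr (h ▸ hnd (w ℓ)))
        · exact Or.inr (h ▸ hnd (w ℓ))
      · rcases hv with rfl | hv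
        · exact Or.inl (Or.inl (hnd a))
        · rw [Set.mem_singleton_iff] at hv
          subst hv
          exact Or.inl (Or.inr (hnd b))
    have hdisj : Disjoint (w '' Sexc) {a, b} := by
      rw [Set.disjoint_left]
      rintro v ⟨ℓ, _, rfl⟩ hv
      rcases hv with hv | hv
      · exact absurd hv (by simp [hwdef, hadef])
      · rw [Set.mem_singleton_iff] at hv
        exact absurd hv (by simp [hwdef, hbdef])
    have hL : ((w '' Sexc) ∪ {a, b}).ncard = Sexc.ncard + 2 := by
      rw [Set.ncard_union_eq hdisj (Set.toFinite _) (Set.toFinite _),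
        Set.ncard_image_of_injective _ hwinj, Set.ncard_pair hab]
    have hR : (D.bag s ∪ D.bag t ∪ D.bag c).ncard ≤ 3 * α := by
      have u1 := Set.ncard_union_le (D.bag s ∪ D.bag t) (D.bag c)
      have u2 := Set.ncard_union_le (D.bag s) (D.bag t)
      have := hth s; have := hth t; have := hth c
      omega
    have := Set.ncard_le_ncard hsub (Set.toFinite _)
    omega
  have hcompl : Sexc.ncard + Sexcᶜ.ncard = 3 * k + 3 * α - 1 := by
    rw [Set.ncard_add_ncard_compl, Nat.card_eq_fintype_card, Fintype.card_fin]
  -- crossing edge assignment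
  have hF : ∀ ℓ : Fin (3 * k + 3 * α - 1), ∃ e : Sym2 (Fin (α + 1) ⊕ ({W : Finset (Fin (α + 1)) // W.card = 2} × Fin (3 * k + 3 * α - 1))), (e = s(w ℓ, b) ∨ e = s(a, w ℓ)) ∧
      (ℓ ∈ Sexcᶜ → e ∈ CS s ∪ CS t ∪ CS c) := by
    intro ℓ
    by_cases hℓ : ℓ ∈ Sexcᶜ
    · have hℓ' : ¬(nd (w ℓ) = s ∨ nd (w ℓ) = t ∨ nd (w ℓ) = c) := hℓ
      push_neg at hℓ'
      obtain ⟨hrs, hrt, hrc⟩ := hℓ'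
      rcases hkey (nd (w ℓ)) hrs hrt hrc with h | h | h | ⟨h, hct⟩
      · exact ⟨s(w ℓ, b), Or.inl rfl, fun _ => Or.inl (Or.inl
          (mkcross s (w ℓ) b (nd (w ℓ)) t hrs (Ne.symm hst) (he1 ℓ) (hnd (w ℓ)) (hnd b) h))⟩
      · exact ⟨s(a, w ℓ), Or.inr rfl, fun _ => Or.inl (Or.inr
          (mkcross t a (w ℓ) s (nd (w ℓ)) hst hrt (he2 ℓ) (hnd a) (hnd (w ℓ)) h))⟩
      · exact ⟨s(a, w ℓ), Or.inr rfl, fun _ => Or.inr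
          (mkcross c a (w ℓ) s (nd (w ℓ)) (Ne.symm hcs) hrc (he2 ℓ) (hnd a) (hnd (w ℓ)) h)⟩
      · exact ⟨s(w ℓ, b), Or.inl rfl, fun _ => Or.inr
          (mkcross c (w ℓ) b (nd (w ℓ)) t hrc (Ne.symm hct) (he1 ℓ) (hnd (w ℓ)) (hnd b) h)⟩
    · exact ⟨s(w ℓ, b), Or.inl rfl, fun h => absurd h hℓ⟩
  choose F hF1 hF2 using hF
  have hwa : ∀ ℓ : Fin (3 * k + 3 * α - 1), w ℓ ≠ a := by intro ℓ; simp [hwdef, hadef]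
  have hwb : ∀ ℓ : Fin (3 * k + 3 * α - 1), w ℓ ≠ b := by intro ℓ; simp [hwdef, hbdef]
  have hinj : Set.InjOn F Sexcᶜ := by
    intro ℓ _ ℓ' _ h
    rcases hF1 ℓ with h1 | h1 <;> rcases hF1 ℓ' with h2 | h2 <;> rw [h1, h2] at h <;>
      rw [Sym2.eq_iff] at h
    · rcases h with ⟨h, -⟩ | ⟨h, -⟩
      · exact hwinj h
      · exact absurd h (hwb ℓ)
    · rcases h with ⟨h, -⟩ | ⟨-, h'⟩
      · exact absurd h (hwa ℓ)
      · exact absurd h' (Ne.symm hab)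
    · rcases h with ⟨h, -⟩ | ⟨h, -⟩
      · exact absurd h.symm (hwa ℓ')
      · exact absurd h hab
    · rcases h with ⟨-, h⟩ | ⟨h, -⟩
      · exact hwinj h
      · exact absurd h.symm (hwa ℓ')
  have hcount : Sexcᶜ.ncard ≤ (CS s ∪ CS t ∪ CS c).ncard :=
    Set.ncard_le_ncard_of_injOn F (fun ℓ h => hF2 ℓ h) hinj (Set.toFinite _)
  have hCS : (CS s ∪ CS t ∪ CS c).ncard ≤ 3 * k := by
    have u1 := Set.ncard_union_le (CS s ∪ CS t) (CS c)
    have u2 := Set.ncard_union_le (CS s) (CS t)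
    have c1 : (CS s).ncard ≤ k := hcr s
    have c2 : (CS t).ncard ≤ k := hcr t
    have c3 : (CS c).ncard ≤ k := hcr c
    omega
  omega

/-- For all positive integers `α` and `k`, the graph `G^{α+1}_{3k+3α−1}` has
`α`-edge-crossing width at least `k+1`. -/
theorem stmt_10 (α k : ℕ) (hα : 0 < α) (hk : 0 < k) :
    k + 1 ≤ ecrwA (Gnk (α + 1) (3 * k + 3 * α - 1)) α := by
  have hne : {m | ∃ D : TreeCutDecomp (Gnk (α + 1) (3 * k + 3 * α - 1)),
      D.ThickLE α ∧ D.CrossLE m}.Nonempty := by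
    refine ⟨(Set.univ : Set (Sym2 (Fin (α + 1) ⊕
      ({W : Finset (Fin (α + 1)) // W.card = 2} × Fin (3 * k + 3 * α - 1))))).ncard, ?_⟩
    refine ⟨⟨Fin (α + 1) ⊕ ({W : Finset (Fin (α + 1)) // W.card = 2} ×
        Fin (3 * k + 3 * α - 1)), inferInstance,
      _root_.starGraph (Sum.inl 0), starGraph_isTree _, fun v => {v},
      fun x y h => Set.disjoint_singleton.2 h, fun v => ⟨v, rfl⟩⟩, ?_, ?_⟩
    · intro x
      simpa using (show 1 ≤ α from hα)
    · intro x
      exact Set.ncard_le_ncard (Set.subset_univ _) (Set.toFinite _)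
  refine le_csInf hne ?_
  rintro m ⟨D, h1, h2⟩
  by_contra h
  push_neg at h
  exact main_contra α k hα hk D h1 (fun x => le_trans (h2 x) (by omega))
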